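/- Fix η > 0 and let 𝔤_η : ℝ² → ℝ be the truncated Coulomb potential, 𝔤_η(x) = 𝔤(x) for |x| ≥ η and 𝔤_η(x) = 𝔤̃(η) for |x| < η. Then for every test function φ ∈ C_c^∞(ℝ²): (i) ∫_{ℝ²} 𝔤_η(x) ∂_j φ(x) dx = ∫_{|x|≥η} (x_j/(2π|x|²)) φ(x) dx for j = 1,2 (i.e. ∇𝔤_η(x) = −x/(2π|x|²)·1_{|x|≥η} in the sense of distributions), and (ii) ∫_{ℝ²} 𝔤_η(x) Δφ(x) dx = −∫_{∂B(0,η)} φ dσ_{∂B(0,η)} (i.e. Δ𝔤_η = −σ_{∂B(0,η)} in the sense of distributions), where σ_{∂B(0,η)} is the uniform probability measure on the circle ∂B(0,η). -/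

import Mathlib

open MeasureTheory Real Filter Function Set
open scoped ENNReal Topology NNReal

noncomputable section

abbrev R2 : Type := EuclideanSpace ℝ (Fin 2)

/-- The 2D Coulomb potential `𝔤(x) = -(1/(2π)) ln |x|`. -/
def gC (x : R2) : ℝ := -(1 / (2 * π)) * Real.log ‖x‖

/-- `𝔤̃(r) = -(1/(2π)) ln r`. -/
def gRad (r : ℝ) : ℝ := -(1 / (2 * π)) * Real.log r

/-- The truncation of `𝔤` to distance `η`. -/
def gTrunc (η : ℝ) (x : R2) : ℝ := if η ≤ ‖x‖ then gC x else gRad η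

/-- The point on the unit circle at angle `θ`. -/
def circleVec (θ : ℝ) : R2 := (WithLp.equiv 2 (Fin 2 → ℝ)).symm ![Real.cos θ, Real.sin θ]

/-- The Laplacian of `φ : ℝ² → ℝ`. -/
def lap (φ : R2 → ℝ) (x : R2) : ℝ :=
  ∑ j : Fin 2, fderiv ℝ (fun y => fderiv ℝ φ y (EuclideanSpace.single j 1)) x
    (EuclideanSpace.single j 1)


/-! ### Auxiliary machinery -/

def eqvE : R2 ≃ᵐ (ℝ × ℝ) :=
  (MeasurableEquiv.toLp 2 (Fin 2 → ℝ)).symm.trans (MeasurableEquiv.finTwoArrow)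

lemma eqvE_pres : MeasurePreserving (⇑eqvE) volume volume :=
  (MeasureTheory.volume_preserving_finTwoArrow ℝ).comp
    (EuclideanSpace.volume_preserving_symm_measurableEquiv_toLp (Fin 2))

lemma eqvE_symm_pres : MeasurePreserving (⇑eqvE.symm) volume volume :=
  eqvE_pres.symm eqvE

def XL (j : Fin 2) (c t : ℝ) : R2 :=
  t • EuclideanSpace.single j 1 + c • EuclideanSpace.single (j + 1) 1

lemma XL_apply_self (j : Fin 2) (c t : ℝ) : XL j c t j = t := by
  fin_cases j <;> simp [XL, EuclideanSpace.single_apply]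

lemma normsq_eq (x : R2) : ‖x‖ ^ 2 = x 0 ^ 2 + x 1 ^ 2 := by
  rw [EuclideanSpace.norm_eq, Real.sq_sqrt (by positivity)]
  simp [Fin.sum_univ_two]

lemma XL_normsq (j : Fin 2) (c t : ℝ) : ‖XL j c t‖ ^ 2 = t ^ 2 + c ^ 2 := by
  rw [EuclideanSpace.norm_eq, Real.sq_sqrt (by positivity)]
  fin_cases j <;> simp [XL, Fin.sum_univ_two, EuclideanSpace.single_apply] <;> ring

lemma XL_cont (j : Fin 2) (c : ℝ) : Continuous fun t => XL j c t :=
  (continuous_id.smul continuous_const).add continuous_const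

lemma XL_hasDerivAt (j : Fin 2) (c t : ℝ) :
    HasDerivAt (fun t => XL j c t) (EuclideanSpace.single j 1) t := by
  have h := ((hasDerivAt_id t).smul_const (EuclideanSpace.single j (1:ℝ))).add_const
    (c • EuclideanSpace.single (j + 1) (1:ℝ))
  simpa [XL] using h

lemma exists_XL_equiv (j : Fin 2) : ∃ e : (ℝ × ℝ) ≃ᵐ R2,
    MeasurePreserving (⇑e) volume volume ∧ ⇑e = fun p => XL j p.1 p.2 := by
  fin_cases j
  · refine ⟨(MeasurableEquiv.prodComm).trans eqvE.symm,
      eqvE_symm_pres.comp (Measure.measurePreserving_swap), ?_⟩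
    funext p; ext i; fin_cases i <;>
      simp [XL, EuclideanSpace.single_apply, eqvE, MeasurableEquiv.finTwoArrow,
        MeasurableEquiv.prodComm] <;> rfl
  · refine ⟨eqvE.symm.trans (MeasurableEquiv.refl _), ?_, ?_⟩
    · exact eqvE_symm_pres
    · funext p; ext i; fin_cases i <;>
        simp [XL, EuclideanSpace.single_apply, eqvE, MeasurableEquiv.finTwoArrow] <;> rfl

lemma abs_coord_le (x : R2) (j : Fin 2) : |x j| ≤ ‖x‖ := by
  have h1 : (x j) ^ 2 ≤ ‖x‖ ^ 2 := by
    rw [normsq_eq]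
    fin_cases j
    · show (x 0) ^ 2 ≤ _; nlinarith [sq_nonneg (x 1)]
    · show (x 1) ^ 2 ≤ _; nlinarith [sq_nonneg (x 0)]
  calc |x j| = √((x j) ^ 2) := (Real.sqrt_sq_eq_abs _).symm
    _ ≤ √(‖x‖ ^ 2) := Real.sqrt_le_sqrt h1
    _ = ‖x‖ := Real.sqrt_sq (norm_nonneg x)

lemma gTrunc_continuous {η : ℝ} (hη : 0 < η) : Continuous (gTrunc η) := by
  have h : gTrunc η = fun x => -(1 / (2 * π)) * Real.log (max η ‖x‖) := by
    funext x
    by_cases h : η ≤ ‖x‖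
    · rw [gTrunc, if_pos h, gC, max_eq_right h]
    · rw [gTrunc, if_neg h, gRad, max_eq_left (le_of_not_ge h)]
  rw [h]
  exact continuous_const.mul ((continuous_const.max continuous_norm).log
    fun x => ne_of_gt (lt_of_lt_of_le hη (le_max_left _ _)))

lemma gTrunc_eq_of_le {η : ℝ} {x : R2} (hη : 0 < η) (h : η ≤ ‖x‖) :
    gTrunc η x = -(1 / (4 * π)) * Real.log (‖x‖ ^ 2) := by
  rw [gTrunc, if_pos h, gC, Real.log_pow]
  push_cast; ring

def Dc (f : R2 → ℝ) (j : Fin 2) (x : R2) : ℝ := fderiv ℝ f x (EuclideanSpace.single j 1)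

def indF (η : ℝ) (f : R2 → ℝ) (j : Fin 2) : R2 → ℝ :=
  ({x : R2 | η ≤ ‖x‖}).indicator fun x => x j / (2 * π * ‖x‖ ^ 2) * f x

def FF (η : ℝ) (f : R2 → ℝ) (j : Fin 2) (x : R2) : ℝ := gTrunc η x * Dc f j x - indF η f j x

lemma Dc_continuous {f : R2 → ℝ} (hf : ContDiff ℝ (⊤ : ℕ∞) f) (j : Fin 2) : Continuous (Dc f j) :=
  ((ContinuousLinearMap.apply ℝ ℝ (EuclideanSpace.single j (1:ℝ))).continuous.comp
    (hf.fderiv_right (m := (⊤ : ℕ∞)) (by simp)).continuous)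

lemma Dc_contDiff {f : R2 → ℝ} (hf : ContDiff ℝ (⊤ : ℕ∞) f) (j : Fin 2) : ContDiff ℝ (⊤ : ℕ∞) (Dc f j) :=
  (hf.fderiv_right (m := (⊤ : ℕ∞)) (by simp)).clm_apply contDiff_const

lemma Dc_hcs {f : R2 → ℝ} (hfc : HasCompactSupport f) (j : Fin 2) :
    HasCompactSupport (Dc f j) :=
  (hfc.fderiv ℝ).comp_left (g := fun L : R2 →L[ℝ] ℝ => L (EuclideanSpace.single j 1)) rfl

lemma exists_radius {f : R2 → ℝ} (hfc : HasCompactSupport f) :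
    ∃ R0 : ℝ, 0 < R0 ∧ ∀ x : R2, R0 ≤ ‖x‖ → f x = 0 ∧ fderiv ℝ f x = 0 := by
  obtain ⟨R0, hR0pos, hsub⟩ := hfc.isBounded.subset_closedBall_lt 0 0
  refine ⟨R0 + 1, by linarith, fun x hx => ?_⟩
  have hx' : x ∉ tsupport f := by
    intro hmem
    have h := hsub hmem
    rw [Metric.mem_closedBall, dist_zero_right] at h
    linarith
  refine ⟨image_eq_zero_of_notMem_tsupport hx', ?_⟩
  by_contra h
  exact hx' (support_fderiv_subset ℝ (by simp [Function.mem_support, h]))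

lemma indF_bound {η : ℝ} (hη : 0 < η) {f : R2 → ℝ} {Cf : ℝ} (hCf : ∀ x : R2, |f x| ≤ Cf)
    (j : Fin 2) (x : R2) : |indF η f j x| ≤ (2 * π * η)⁻¹ * Cf := by
  have hCf0 : 0 ≤ Cf := le_trans (abs_nonneg _) (hCf 0)
  rw [indF, Set.indicator_apply]
  split_ifs with h
  · have hx : η ≤ ‖x‖ := h
    have hx0 : (0:ℝ) < ‖x‖ := lt_of_lt_of_le hη hx
    have hxx : (0:ℝ) < 2 * π * ‖x‖ ^ 2 := by
      have := pi_pos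
      have := pow_pos hx0 2
      positivity
    rw [abs_mul, abs_div]
    have h1 : |x j| / |2 * π * ‖x‖ ^ 2| ≤ (2 * π * η)⁻¹ := by
      rw [abs_of_pos hxx, div_le_iff₀ hxx]
      have h2 : (2 * π * η)⁻¹ * (2 * π * ‖x‖ ^ 2) = ‖x‖ ^ 2 / η := by
        field_simp
      rw [h2]
      have h3 : ‖x‖ ≤ ‖x‖ ^ 2 / η := by
        rw [le_div_iff₀ hη]; nlinarith
      exact le_trans (abs_coord_le x j) h3
    exact mul_le_mul h1 (hCf x) (abs_nonneg _) (by positivity)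
  · rw [abs_zero]
    exact mul_nonneg (by positivity) hCf0

lemma coord_continuous (j : Fin 2) : Continuous fun x : R2 => x j :=
  (EuclideanSpace.proj (𝕜 := ℝ) (ι := Fin 2) j).continuous

lemma setK_measurable {η : ℝ} : MeasurableSet {x : R2 | η ≤ ‖x‖} :=
  (isClosed_le continuous_const continuous_norm).measurableSet

lemma indF_measurable {η : ℝ} {f : R2 → ℝ} (hf : Continuous f) (j : Fin 2) :
    Measurable (indF η f j) := by
  refine Measurable.indicator ?_ setK_measurable
  exact ((coord_continuous j).measurable.div
    ((continuous_const.mul (continuous_norm.pow 2)).measurable)).mul hf.measurable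

lemma FF_measurable {η : ℝ} (hη : 0 < η) {f : R2 → ℝ} (hf : ContDiff ℝ (⊤ : ℕ∞) f) (j : Fin 2) :
    Measurable (FF η f j) :=
  (((gTrunc_continuous hη).mul (Dc_continuous hf j)).measurable).sub (indF_measurable hf.continuous j)

lemma int_g_mul {η : ℝ} (hη : 0 < η) {f : R2 → ℝ} (hf : ContDiff ℝ (⊤ : ℕ∞) f)
    (hfc : HasCompactSupport f) (j : Fin 2) :
    Integrable (fun x => gTrunc η x * Dc f j x) := by
  apply Continuous.integrable_of_hasCompactSupport
    ((gTrunc_continuous hη).mul (Dc_continuous hf j))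
  exact (Dc_hcs hfc j).mul_left

lemma int_ind {η : ℝ} (hη : 0 < η) {f : R2 → ℝ} (hf : Continuous f)
    (hfc : HasCompactSupport f) (j : Fin 2) : Integrable (indF η f j) := by
  obtain ⟨Cf, hCf⟩ := hfc.exists_bound_of_continuous hf
  have hCf' : ∀ x : R2, |f x| ≤ Cf := fun x => by simpa [Real.norm_eq_abs] using hCf x
  have hmeas := indF_measurable (η := η) hf j
  have hsupp : Function.support (indF η f j) ⊆ tsupport f := by
    intro x hx
    apply subset_tsupport
    intro hfx
    apply hx
    simp [indF, Set.indicator_apply, hfx]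
  rw [← integrableOn_iff_integrable_of_support_subset hsupp]
  exact Measure.integrableOn_of_bounded hfc.isCompact.measure_lt_top.ne
    hmeas.aestronglyMeasurable (ae_of_all _ fun x => by
      simpa [Real.norm_eq_abs] using indF_bound hη hCf' j x)

lemma FF_integrable {η : ℝ} (hη : 0 < η) {f : R2 → ℝ} (hf : ContDiff ℝ (⊤ : ℕ∞) f)
    (hfc : HasCompactSupport f) (j : Fin 2) : Integrable (FF η f j) := by
  have h := (int_g_mul hη hf hfc j).sub (int_ind hη hf.continuous hfc j)
  exact h

lemma FF_bound {η : ℝ} (hη : 0 < η) {f : R2 → ℝ} (hf : ContDiff ℝ (⊤ : ℕ∞) f)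
    (hfc : HasCompactSupport f) (j : Fin 2) : ∃ C : ℝ, ∀ x : R2, |FF η f j x| ≤ C := by
  obtain ⟨C1, hC1⟩ := ((Dc_hcs hfc j).mul_left (f := gTrunc η)).exists_bound_of_continuous
    ((gTrunc_continuous hη).mul (Dc_continuous hf j))
  obtain ⟨C2, hC2⟩ := hfc.exists_bound_of_continuous hf.continuous
  have hC2' : ∀ x : R2, |f x| ≤ C2 := fun x => by simpa [Real.norm_eq_abs] using hC2 x
  refine ⟨C1 + (2 * π * η)⁻¹ * C2, fun x => ?_⟩
  calc |FF η f j x| ≤ |gTrunc η x * Dc f j x| + |indF η f j x| := abs_sub _ _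
    _ ≤ C1 + (2 * π * η)⁻¹ * C2 := by
        have := hC1 x
        rw [Real.norm_eq_abs] at this
        exact add_le_add (le_trans (le_of_eq rfl) this) (indF_bound hη hC2' j x)

set_option maxHeartbeats 2000000 in
lemma line_int {η : ℝ} (hη : 0 < η) {f : R2 → ℝ} (hf : ContDiff ℝ (⊤ : ℕ∞) f)
    (hfc : HasCompactSupport f) (j : Fin 2) (c : ℝ) :
    ∫ t : ℝ, FF η f j (XL j c t) = 0 := by
  obtain ⟨R0, hR0, hvan⟩ := exists_radius hfc
  set R : ℝ := R0 + η + 1 with hR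
  set v := EuclideanSpace.single j (1:ℝ) with hv
  set X := fun t => XL j c t with hX
  set h := fun t => gTrunc η (X t) * f (X t) with hh
  have hXnorm : ∀ t, ‖X t‖ ^ 2 = t ^ 2 + c ^ 2 := fun t => XL_normsq j c t
  have hXj : ∀ t, X t j = t := fun t => XL_apply_self j c t
  have hXcont : Continuous X := XL_cont j c
  have hfX : ∀ t, HasDerivAt (fun s => f (X s)) (Dc f j (X t)) t := fun t =>
    ((hf.differentiable (by simp)).differentiableAt.hasFDerivAt).comp_hasDerivAt t
      (XL_hasDerivAt j c t)
  have hcont : Continuous h :=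
    ((gTrunc_continuous hη).comp hXcont).mul ((hf.continuous).comp hXcont)
  -- outer derivative
  have houter : ∀ t : ℝ, (∀ᶠ s in 𝓝 t, η ≤ ‖X s‖) → HasDerivAt h (FF η f j (X t)) t := by
    intro t hev
    have htmem : η ≤ ‖X t‖ := hev.self_of_nhds
    have hnpos : (0:ℝ) < ‖X t‖ := lt_of_lt_of_le hη htmem
    have hpos : (0:ℝ) < t ^ 2 + c ^ 2 := by nlinarith [hXnorm t]
    have hEq : h =ᶠ[𝓝 t] fun s => -(1 / (4 * π)) * Real.log (s ^ 2 + c ^ 2) * f (X s) := by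
      filter_upwards [hev] with s hs
      rw [hh]
      simp only
      rw [gTrunc_eq_of_le hη hs, hXnorm s]
    have h1 : HasDerivAt (fun s : ℝ => s ^ 2 + c ^ 2) (2 * t) t := by
      simpa using (hasDerivAt_pow 2 t).add_const (c ^ 2)
    have hlog : HasDerivAt (fun s : ℝ => Real.log (s ^ 2 + c ^ 2)) (2 * t / (t ^ 2 + c ^ 2)) t :=
      h1.log (ne_of_gt hpos)
    have hD : HasDerivAt (fun s => -(1 / (4 * π)) * Real.log (s ^ 2 + c ^ 2) * f (X s))
        ((-(1 / (4 * π)) * (2 * t / (t ^ 2 + c ^ 2))) * f (X t)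
          + (-(1 / (4 * π)) * Real.log (t ^ 2 + c ^ 2)) * Dc f j (X t)) t :=
      (hlog.const_mul (-(1 / (4 * π)))).mul (hfX t)
    have hD2 := hD.congr_of_eventuallyEq hEq
    refine hD2.congr_deriv (Eq.symm ?_)
    rw [FF, indF, Set.indicator_of_mem (show X t ∈ {x : R2 | η ≤ ‖x‖} from htmem),
      gTrunc_eq_of_le hη htmem, hXj t, hXnorm t]
    have hπ := pi_ne_zero
    field_simp
    ring
  -- inner derivative
  have hinner : ∀ t : ℝ, ‖X t‖ < η → HasDerivAt h (FF η f j (X t)) t := by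
    intro t ht
    have hev : ∀ᶠ s in 𝓝 t, ‖X s‖ < η :=
      (hXcont.norm.continuousAt).eventually_lt continuousAt_const ht
    have hEq : h =ᶠ[𝓝 t] fun s => gRad η * f (X s) := by
      filter_upwards [hev] with s hs
      rw [hh]
      simp only
      rw [gTrunc, if_neg (not_le.mpr hs)]
    have hD := ((hfX t).const_mul (gRad η)).congr_of_eventuallyEq hEq
    refine hD.congr_deriv (Eq.symm ?_)
    rw [FF, gTrunc, if_neg (not_le.mpr ht), indF,
      Set.indicator_of_notMem (show X t ∉ {x : R2 | η ≤ ‖x‖} from not_le.mpr ht)]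
    ring
  -- interval integrability
  obtain ⟨C, hC⟩ := FF_bound hη hf hfc j
  have hFmeas : Measurable fun t => FF η f j (X t) :=
    (FF_measurable hη hf j).comp hXcont.measurable
  have hII : ∀ a b : ℝ, IntervalIntegrable (fun t => FF η f j (X t)) volume a b := by
    intro a b
    rw [intervalIntegrable_iff]
    refine Measure.integrableOn_of_bounded ?_ hFmeas.aestronglyMeasurable
      (ae_of_all _ fun t => by simpa [Real.norm_eq_abs] using hC (X t))
    rw [Set.uIoc]
    exact measure_Ioc_lt_top.ne
  -- support facts
  have hnorm_ge : ∀ t : ℝ, R ≤ |t| → R0 + 1 ≤ ‖X t‖ := by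
    intro t ht
    have h2 : (R0 + 1) ^ 2 ≤ ‖X t‖ ^ 2 := by
      rw [hXnorm]
      nlinarith [sq_abs t, sq_nonneg c, abs_nonneg t]
    nlinarith [norm_nonneg (X t)]
  have hFzero : ∀ t : ℝ, R ≤ |t| → FF η f j (X t) = 0 := by
    intro t ht
    have hv2 := hvan (X t) (by linarith [hnorm_ge t ht])
    rw [FF, Dc, hv2.2, indF]
    simp [hv2.1, Set.indicator_apply]
  have hhzero : ∀ t : ℝ, R ≤ |t| → h t = 0 := by
    intro t ht
    have hv2 := hvan (X t) (by linarith [hnorm_ge t ht])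
    rw [hh]; simp only; rw [hv2.1, mul_zero]
  have hRpos : 0 < R := by rw [hR]; linarith
  -- reduce to interval
  have hred : ∫ t : ℝ, FF η f j (X t) = ∫ t in (-R)..R, FF η f j (X t) := by
    rw [intervalIntegral.integral_of_le (by linarith : -R ≤ R)]
    rw [setIntegral_eq_integral_of_forall_compl_eq_zero]
    intro t ht
    apply hFzero
    rcases not_and_or.mp ht with h1 | h1
    · push_neg at h1
      exact le_abs.mpr (Or.inr (by linarith))
    · push_neg at h1
      exact le_abs.mpr (Or.inl h1.le)
  rw [hred]
  by_cases hc2 : η ^ 2 ≤ c ^ 2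
  · -- no kinks
    have hall : ∀ s : ℝ, η ≤ ‖X s‖ := by
      intro s
      nlinarith [hXnorm s, norm_nonneg (X s), sq_nonneg s, hη.le]
    have hder : ∀ t ∈ Set.uIcc (-R) R, HasDerivAt h (FF η f j (X t)) t :=
      fun t _ => houter t (Filter.Eventually.of_forall hall)
    rw [intervalIntegral.integral_eq_sub_of_hasDerivAt hder (hII _ _)]
    rw [hhzero R (by rw [abs_of_pos hRpos]), hhzero (-R) (by rw [abs_neg, abs_of_pos hRpos]),
      sub_zero]
  · push_neg at hc2
    set k : ℝ := Real.sqrt (η ^ 2 - c ^ 2) with hk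
    have hk2 : k ^ 2 = η ^ 2 - c ^ 2 := Real.sq_sqrt (by nlinarith)
    have hkpos : 0 < k := Real.sqrt_pos.mpr (by nlinarith)
    have hkη : k ≤ η := by nlinarith
    have hkR : k < R := by rw [hR]; linarith
    have hd1 : ∀ t ∈ Set.Ioo (-R) (-k), HasDerivAt h (FF η f j (X t)) t := by
      intro t ht
      apply houter
      have hsq : η ^ 2 < t ^ 2 + c ^ 2 := by
        nlinarith [mul_pos (show (0:ℝ) < -k - t by linarith [ht.2])
          (show (0:ℝ) < k - t by linarith [ht.2, hkpos])]
      have hst : η < ‖X t‖ := by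
        have := hXnorm t
        nlinarith [norm_nonneg (X t)]
      exact ((continuousAt_const.eventually_lt hXcont.norm.continuousAt hst).mono
        fun s hs => hs.le)
    have hd3 : ∀ t ∈ Set.Ioo k R, HasDerivAt h (FF η f j (X t)) t := by
      intro t ht
      apply houter
      have hsq : η ^ 2 < t ^ 2 + c ^ 2 := by
        nlinarith [mul_pos (show (0:ℝ) < t - k by linarith [ht.1])
          (show (0:ℝ) < t + k by linarith [ht.1, hkpos])]
      have hst : η < ‖X t‖ := by
        have := hXnorm t
        nlinarith [norm_nonneg (X t)]
      exact ((continuousAt_const.eventually_lt hXcont.norm.continuousAt hst).mono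
        fun s hs => hs.le)
    have hd2 : ∀ t ∈ Set.Ioo (-k) k, HasDerivAt h (FF η f j (X t)) t := by
      intro t ht
      apply hinner
      have hsq : t ^ 2 + c ^ 2 < η ^ 2 := by
        nlinarith [mul_pos (show (0:ℝ) < k - t by linarith [ht.2])
          (show (0:ℝ) < k + t by linarith [ht.1])]
      have := hXnorm t
      nlinarith [norm_nonneg (X t)]
    have hp1 := intervalIntegral.integral_eq_sub_of_hasDeriv_right_of_le
      (by linarith : -R ≤ -k) hcont.continuousOn
      (fun t ht => (hd1 t ht).hasDerivWithinAt) (hII _ _)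
    have hp2 := intervalIntegral.integral_eq_sub_of_hasDeriv_right_of_le
      (by linarith : -k ≤ k) hcont.continuousOn
      (fun t ht => (hd2 t ht).hasDerivWithinAt) (hII _ _)
    have hp3 := intervalIntegral.integral_eq_sub_of_hasDeriv_right_of_le
      (by linarith : k ≤ R) hcont.continuousOn
      (fun t ht => (hd3 t ht).hasDerivWithinAt) (hII _ _)
    have hsum1 := intervalIntegral.integral_add_adjacent_intervals (hII (-R) (-k)) (hII (-k) k)
    have hsum2 := intervalIntegral.integral_add_adjacent_intervals (hII (-R) k) (hII k R)
    rw [← hsum2, ← hsum1, hp1, hp2, hp3]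
    rw [hhzero R (by rw [abs_of_pos hRpos]), hhzero (-R) (by rw [abs_neg, abs_of_pos hRpos])]
    ring

lemma key1 {η : ℝ} (hη : 0 < η) {f : R2 → ℝ} (hf : ContDiff ℝ (⊤ : ℕ∞) f)
    (hfc : HasCompactSupport f) (j : Fin 2) :
    ∫ x : R2, gTrunc η x * fderiv ℝ f x (EuclideanSpace.single j 1) =
      ∫ x in {x : R2 | η ≤ ‖x‖}, x j / (2 * π * ‖x‖ ^ 2) * f x := by
  obtain ⟨e, hPres, hXe⟩ := exists_XL_equiv j
  have hInt1 := int_g_mul hη hf hfc j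
  have hInt2 := int_ind hη hf.continuous hfc j
  have hFint : Integrable (FF η f j) := FF_integrable hη hf hfc j
  have hzero : ∫ x : R2, FF η f j x = 0 := by
    rw [← hPres.integral_comp e.measurableEmbedding]
    have hcomp : Integrable ((FF η f j) ∘ ⇑e) volume :=
      (hPres.integrable_comp_emb e.measurableEmbedding).mpr hFint
    have h1 : (fun p : ℝ × ℝ => FF η f j (e p)) = fun p : ℝ × ℝ => FF η f j (XL j p.1 p.2) := by
      rw [hXe]
    calc ∫ p : ℝ × ℝ, FF η f j (e p) = ∫ p : ℝ × ℝ, FF η f j (XL j p.1 p.2) := by rw [h1]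
      _ = ∫ c : ℝ, ∫ t : ℝ, FF η f j (XL j c t) := by
          have h2 : Integrable (fun p : ℝ × ℝ => FF η f j (XL j p.1 p.2))
              (volume.prod volume) := by
            rw [← MeasureTheory.Measure.volume_eq_prod, ← h1]
            exact hcomp
          rw [MeasureTheory.Measure.volume_eq_prod, MeasureTheory.integral_prod _ h2]
      _ = 0 := by
          simp only [line_int hη hf hfc j]
          simp
  have hsub : ∫ x : R2, (gTrunc η x * Dc f j x - indF η f j x) =
      (∫ x : R2, gTrunc η x * Dc f j x) - ∫ x : R2, indF η f j x :=
    integral_sub hInt1 hInt2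
  have hzero' : (∫ x : R2, gTrunc η x * Dc f j x) - (∫ x : R2, indF η f j x) = 0 := by
    rw [← hsub]
    exact hzero
  have hind : ∫ x : R2, indF η f j x = ∫ x in {x : R2 | η ≤ ‖x‖}, x j / (2 * π * ‖x‖ ^ 2) * f x :=
    integral_indicator setK_measurable
  have : ∫ x : R2, gTrunc η x * Dc f j x = ∫ x : R2, indF η f j x := by linarith
  rw [← hind]
  exact this

lemma circleVec_norm (θ : ℝ) : ‖circleVec θ‖ = 1 := by
  rw [EuclideanSpace.norm_eq]
  have h0 : circleVec θ 0 = Real.cos θ := rfl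
  have h1 : circleVec θ 1 = Real.sin θ := rfl
  rw [Fin.sum_univ_two, h0, h1, Real.norm_eq_abs, Real.norm_eq_abs, sq_abs, sq_abs]
  rw [show Real.cos θ ^ 2 + Real.sin θ ^ 2 = 1 from by
    rw [← Real.sin_sq_add_cos_sq θ]; ring]
  exact Real.sqrt_one

lemma circleVec_periodic : Function.Periodic (fun θ => circleVec θ) (2 * π) := by
  intro θ
  simp only [circleVec, Real.cos_add_two_pi, Real.sin_add_two_pi]

lemma smul_circleVec_apply (r θ : ℝ) (i : Fin 2) :
    (r • circleVec θ) i = r * (circleVec θ) i := rfl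

lemma eqvE_symm_polar (p : ℝ × ℝ) :
    eqvE.symm (polarCoord.symm p) = p.1 • circleVec p.2 := by
  ext i
  rw [polarCoord_symm_apply]
  fin_cases i <;> simp [eqvE, circleVec, MeasurableEquiv.finTwoArrow]

lemma clm_eval (L : R2 →L[ℝ] ℝ) (y : R2) :
    L y = ∑ j : Fin 2, y j * L (EuclideanSpace.single j 1) := by
  have hy : y = ∑ j : Fin 2, y j • EuclideanSpace.single j (1:ℝ) := by
    ext i
    rw [Fin.sum_univ_two]
    fin_cases i <;> simp [EuclideanSpace.single_apply]
  conv_lhs => rw [hy]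
  rw [map_sum]
  congr 1
  funext j
  rw [ContinuousLinearMap.map_smul, smul_eq_mul]

set_option maxHeartbeats 1000000 in
lemma key2 {η : ℝ} (hη : 0 < η) {φ : R2 → ℝ} (hφ : ContDiff ℝ (⊤ : ℕ∞) φ)
    (hφc : HasCompactSupport φ) :
    (∫ x : R2, gTrunc η x * lap φ x) =
      -((2 * π)⁻¹ * ∫ θ in (0 : ℝ)..(2 * π), φ (η • circleVec θ)) := by
  have hπ : (0:ℝ) < π := pi_pos
  have hψ : ∀ j : Fin 2, ContDiff ℝ (⊤ : ℕ∞) (Dc φ j) := fun j => Dc_contDiff hφ j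
  have hψc : ∀ j : Fin 2, HasCompactSupport (Dc φ j) := fun j => Dc_hcs hφc j
  obtain ⟨R0, hR0, hvan⟩ := exists_radius hφc
  set H : R2 → ℝ := fun x => ∑ j : Fin 2, indF η (Dc φ j) j x with hH
  -- step A
  have hA : ∫ x : R2, gTrunc η x * lap φ x = ∫ x : R2, H x := by
    have h1 : ∫ x : R2, gTrunc η x * lap φ x
        = ∑ j : Fin 2, ∫ x : R2, gTrunc η x * Dc (Dc φ j) j x := by
      rw [← integral_finset_sum]
      · congr 1
        funext x
        rw [lap, Finset.mul_sum]
        rfl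
      · exact fun j _ => int_g_mul hη (hψ j) (hψc j) j
    rw [h1]
    have h2 : ∀ j : Fin 2, ∫ x : R2, gTrunc η x * Dc (Dc φ j) j x
        = ∫ x : R2, indF η (Dc φ j) j x := by
      intro j
      have h3 := key1 hη (hψ j) (hψc j) j
      rw [show (∫ x : R2, gTrunc η x * Dc (Dc φ j) j x)
          = ∫ x : R2, gTrunc η x * fderiv ℝ (Dc φ j) x (EuclideanSpace.single j 1) from rfl,
        h3, ← integral_indicator setK_measurable]
      rfl
    simp only [h2]
    rw [← integral_finset_sum]
    exact fun j _ => int_ind hη (hψ j).continuous (hψc j) j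
  -- measurability and bounds for H
  have hHmeas : Measurable H := by
    apply Finset.measurable_sum
    exact fun j _ => indF_measurable (hψ j).continuous j
  obtain ⟨CH, hCH0, hCHb⟩ : ∃ CH : ℝ, 0 ≤ CH ∧ ∀ x : R2, |H x| ≤ CH := by
    obtain ⟨C0, hC0⟩ := (hψc 0).exists_bound_of_continuous (hψ 0).continuous
    obtain ⟨C1, hC1⟩ := (hψc 1).exists_bound_of_continuous (hψ 1).continuous
    have hb0 : ∀ x : R2, |indF η (Dc φ 0) 0 x| ≤ (2 * π * η)⁻¹ * C0 :=
      fun x => indF_bound hη (fun y => by simpa [Real.norm_eq_abs] using hC0 y) 0 x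
    have hb1 : ∀ x : R2, |indF η (Dc φ 1) 1 x| ≤ (2 * π * η)⁻¹ * C1 :=
      fun x => indF_bound hη (fun y => by simpa [Real.norm_eq_abs] using hC1 y) 1 x
    refine ⟨(2 * π * η)⁻¹ * C0 + (2 * π * η)⁻¹ * C1, ?_, ?_⟩
    · have := le_trans (abs_nonneg _) (hb0 0)
      have := le_trans (abs_nonneg _) (hb1 0)
      linarith
    · intro x
      rw [hH]
      simp only [Fin.sum_univ_two]
      exact le_trans (abs_add_le _ _) (add_le_add (hb0 x) (hb1 x))
  have hHint : Integrable H := by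
    apply integrable_finset_sum
    exact fun j _ => int_ind hη (hψ j).continuous (hψc j) j
  -- pointwise polar form
  have hpt : ∀ θ : ℝ, ∀ r ∈ Set.Ioi (0:ℝ), r * H (r • circleVec θ)
      = Set.indicator (Set.Ici η)
        (fun r => (2 * π)⁻¹ * fderiv ℝ φ (r • circleVec θ) (circleVec θ)) r := by
    intro θ r hr
    have hr0 : (0:ℝ) < r := hr
    have hnorm : ‖r • circleVec θ‖ = r := by
      rw [norm_smul, circleVec_norm, mul_one, Real.norm_eq_abs, abs_of_pos hr0]
    by_cases hrη : η ≤ r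
    · rw [Set.indicator_of_mem (show r ∈ Set.Ici η from hrη)]
      have hmem : (r • circleVec θ) ∈ {x : R2 | η ≤ ‖x‖} := by
        rw [Set.mem_setOf_eq, hnorm]; exact hrη
      rw [hH]
      simp only [indF, Set.indicator_of_mem hmem]
      rw [clm_eval (fderiv ℝ φ (r • circleVec θ)) (circleVec θ), Finset.mul_sum, Finset.mul_sum]
      apply Finset.sum_congr rfl
      intro j _
      rw [smul_circleVec_apply, hnorm]
      simp only [Dc]
      field_simp
    · rw [Set.indicator_of_notMem (show r ∉ Set.Ici η from hrη)]
      have hmem : (r • circleVec θ) ∉ {x : R2 | η ≤ ‖x‖} := by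
        rw [Set.mem_setOf_eq, hnorm]; exact hrη
      rw [hH]
      simp only [indF, Set.indicator_of_notMem hmem]
      simp
  -- measurability of polar integrand
  have hsm : Measurable fun p : ℝ × ℝ => p.1 • circleVec p.2 := by
    have h1 : (fun p : ℝ × ℝ => p.1 • circleVec p.2)
        = fun p : ℝ × ℝ => eqvE.symm ((p.1 * Real.cos p.2, p.1 * Real.sin p.2) : ℝ × ℝ) := by
      funext p
      rw [← eqvE_symm_polar p, polarCoord_symm_apply]
    rw [h1]
    exact eqvE.symm.measurable.comp
      ((measurable_fst.mul (Real.continuous_cos.measurable.comp measurable_snd)).prodMk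
        (measurable_fst.mul (Real.continuous_sin.measurable.comp measurable_snd)))
  have hfm : Measurable fun p : ℝ × ℝ => p.1 * H (p.1 • circleVec p.2) :=
    measurable_fst.mul (hHmeas.comp hsm)
  -- integrability on the product
  have hprod : Integrable (fun p : ℝ × ℝ => p.1 * H (p.1 • circleVec p.2))
      ((volume.restrict (Set.Ioi (0:ℝ))).prod (volume.restrict (Set.Ioo (-π) π))) := by
    rw [Measure.prod_restrict, ← MeasureTheory.Measure.volume_eq_prod]
    set A : Set (ℝ × ℝ) := Set.Icc η R0 ×ˢ Set.Icc (-π) π with hA'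
    have hAint : IntegrableOn (fun p : ℝ × ℝ => p.1 * H (p.1 • circleVec p.2)) A := by
      have hbd : ∀ᵐ p ∂(volume.restrict A), ‖p.1 * H (p.1 • circleVec p.2)‖ ≤ R0 * CH := by
        refine (ae_restrict_iff' (measurableSet_Icc.prod measurableSet_Icc)).mpr
          (ae_of_all _ ?_)
        intro p hp
        rw [Real.norm_eq_abs, abs_mul]
        have hp1 : |p.1| ≤ R0 := by
          rw [abs_of_nonneg (le_trans hη.le hp.1.1)]; exact hp.1.2
        exact mul_le_mul hp1 (hCHb _) (abs_nonneg _) (by linarith)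
      exact Measure.integrableOn_of_bounded
        (isCompact_Icc.prod isCompact_Icc).measure_lt_top.ne hfm.aestronglyMeasurable hbd
    have hzero : ∀ p ∈ (Set.Ioi (0:ℝ) ×ˢ Set.Ioo (-π) π) \ A,
        p.1 * H (p.1 • circleVec p.2) = 0 := by
      intro p hp
      obtain ⟨⟨hp1, hp2⟩, hpA⟩ := hp
      have hp1' : p.1 ∉ Set.Icc η R0 := by
        intro hmem
        exact hpA ⟨hmem, hp2.1.le, hp2.2.le⟩
      have hnorm : ‖p.1 • circleVec p.2‖ = p.1 := by
        rw [norm_smul, circleVec_norm, mul_one, Real.norm_eq_abs, abs_of_pos hp1]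
      rw [Set.mem_Icc, not_and_or] at hp1'
      rcases hp1' with h | h
      · push_neg at h
        have hmem : (p.1 • circleVec p.2) ∉ {x : R2 | η ≤ ‖x‖} := by
          rw [Set.mem_setOf_eq, hnorm]; exact not_le.mpr h
        rw [hH]
        simp [indF, Set.indicator_of_notMem hmem]
      · push_neg at h
        have hd : ∀ j : Fin 2, Dc φ j (p.1 • circleVec p.2) = 0 := by
          intro j
          rw [Dc, (hvan _ (by rw [hnorm]; exact h.le)).2]
          simp
        rw [hH]
        simp [indF, Set.indicator_apply, hd]
    have hsplit : (Set.Ioi (0:ℝ) ×ˢ Set.Ioo (-π) π)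
        ⊆ A ∪ ((Set.Ioi (0:ℝ) ×ˢ Set.Ioo (-π) π) \ A) := by
      intro p hp
      by_cases h : p ∈ A
      · exact Or.inl h
      · exact Or.inr ⟨hp, h⟩
    apply IntegrableOn.mono_set ?_ hsplit
    apply hAint.union
    exact (integrableOn_zero).congr_fun (fun p hp => (hzero p hp).symm)
      ((measurableSet_Ioi.prod measurableSet_Ioo).diff
        (measurableSet_Icc.prod measurableSet_Icc))
  -- inner integral
  have hinner : ∀ θ : ℝ, (∫ r in Set.Ioi (0:ℝ), r * H (r • circleVec θ))
      = -((2 * π)⁻¹ * φ (η • circleVec θ)) := by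
    intro θ
    rw [setIntegral_congr_fun measurableSet_Ioi (hpt θ)]
    rw [setIntegral_indicator measurableSet_Ici]
    have hIN : Set.Ioi (0:ℝ) ∩ Set.Ici η = Set.Ici η :=
      Set.inter_eq_right.mpr (fun x hx => lt_of_lt_of_le hη hx)
    rw [hIN]
    rw [MeasureTheory.integral_Ici_eq_integral_Ioi]
    rw [MeasureTheory.integral_const_mul]
    have hq : ∀ r : ℝ, HasDerivAt (fun r : ℝ => φ (r • circleVec θ))
        (fderiv ℝ φ (r • circleVec θ) (circleVec θ)) r := by
      intro r
      apply HasFDerivAt.comp_hasDerivAt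
      · exact ((hφ.differentiable (by simp)) (r • circleVec θ)).hasFDerivAt
      · simpa using (hasDerivAt_id r).smul_const (circleVec θ)
    have hcont' : Continuous fun r : ℝ => fderiv ℝ φ (r • circleVec θ) (circleVec θ) := by
      have h1 : Continuous fun r : ℝ => r • circleVec θ := continuous_id.smul continuous_const
      exact (ContinuousLinearMap.apply ℝ ℝ (circleVec θ)).continuous.comp
        ((hφ.fderiv_right (m := (⊤ : ℕ∞)) (by simp)).continuous.comp h1)
    have hsupp : HasCompactSupport fun r : ℝ => fderiv ℝ φ (r • circleVec θ) (circleVec θ) := by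
      apply HasCompactSupport.intro (isCompact_Icc (a := -R0) (b := R0))
      intro r hr
      rw [Set.mem_Icc, not_and_or] at hr
      have hnr : R0 ≤ ‖r • circleVec θ‖ := by
        rw [norm_smul, circleVec_norm, mul_one, Real.norm_eq_abs]
        rcases hr with h | h
        · push_neg at h
          exact le_abs.mpr (Or.inr (by linarith))
        · push_neg at h
          exact le_abs.mpr (Or.inl h.le)
      rw [(hvan _ hnr).2]
      simp
    have htend : Tendsto (fun r : ℝ => φ (r • circleVec θ)) atTop (𝓝 0) := by
      apply Tendsto.congr' ?_ tendsto_const_nhds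
      refine eventually_atTop.mpr ⟨R0, fun r hr => ?_⟩
      have hnr : R0 ≤ ‖r • circleVec θ‖ := by
        rw [norm_smul, circleVec_norm, mul_one, Real.norm_eq_abs,
          abs_of_nonneg (le_trans hR0.le hr)]
        exact hr
      exact ((hvan _ hnr).1).symm
    have hFTC := MeasureTheory.integral_Ioi_of_hasDerivAt_of_tendsto' (a := η)
      (fun r _ => hq r) (hcont'.integrable_of_hasCompactSupport hsupp).integrableOn htend
    rw [hFTC]
    ring
  -- period
  have hper : Function.Periodic (fun θ => φ (η • circleVec θ)) (2 * π) := by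
    intro θ
    simp only
    rw [show circleVec (θ + 2 * π) = circleVec θ from circleVec_periodic θ]
  have h6 : ∫ θ in (0:ℝ)..(2 * π), φ (η • circleVec θ)
      = ∫ θ in Set.Ioo (-π) π, φ (η • circleVec θ) := by
    have h5 := hper.intervalIntegral_add_eq 0 (-π)
    rw [zero_add, show -π + 2 * π = π by ring] at h5
    rw [h5, intervalIntegral.integral_of_le (by linarith : -π ≤ π),
      MeasureTheory.integral_Ioc_eq_integral_Ioo]
  -- assemble
  rw [hA]
  calc ∫ x : R2, H x = ∫ p : ℝ × ℝ, H (eqvE.symm p) :=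
        (eqvE_symm_pres.integral_comp eqvE.symm.measurableEmbedding _).symm
    _ = ∫ p in polarCoord.target, p.1 • H (eqvE.symm (polarCoord.symm p)) :=
        (integral_comp_polarCoord_symm _).symm
    _ = ∫ p in Set.Ioi (0:ℝ) ×ˢ Set.Ioo (-π) π, p.1 * H (p.1 • circleVec p.2) := by
        apply setIntegral_congr_fun (measurableSet_Ioi.prod measurableSet_Ioo)
        intro p _
        show p.1 • H (eqvE.symm (polarCoord.symm p)) = p.1 * H (p.1 • circleVec p.2)
        rw [eqvE_symm_polar, smul_eq_mul]
    _ = ∫ θ in Set.Ioo (-π) π, ∫ r in Set.Ioi (0:ℝ), r * H (r • circleVec θ) := by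
        rw [MeasureTheory.Measure.volume_eq_prod, ← Measure.prod_restrict]
        exact MeasureTheory.integral_prod_symm _ hprod
    _ = ∫ θ in Set.Ioo (-π) π, -((2 * π)⁻¹ * φ (η • circleVec θ)) := by
        simp only [hinner]
    _ = -((2 * π)⁻¹ * ∫ θ in (0 : ℝ)..(2 * π), φ (η • circleVec θ)) := by
        rw [integral_neg, MeasureTheory.integral_const_mul, h6]

/-- distributional identities for the truncated Coulomb potential:
`∇𝔤_η(x) = -x/(2π|x|²)·1_{|x|≥η}` and `Δ𝔤_η = -σ_{∂B(0,η)}`, the latter circle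
measure written via the parametrization `θ ↦ η•(cos θ, sin θ)` normalized by `2π`. -/
theorem stmt5 (η : ℝ) (hη : 0 < η) (φ : R2 → ℝ)
    (hφ : ContDiff ℝ (⊤ : ℕ∞) φ) (hφc : HasCompactSupport φ) :
    (∀ j : Fin 2,
      ∫ x, gTrunc η x * fderiv ℝ φ x (EuclideanSpace.single j 1) =
        ∫ x in {x : R2 | η ≤ ‖x‖}, x j / (2 * π * ‖x‖ ^ 2) * φ x) ∧
    (∫ x, gTrunc η x * lap φ x) =
      -((2 * π)⁻¹ * ∫ θ in (0 : ℝ)..(2 * π), φ (η • circleVec θ)) := by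
  exact ⟨fun j => key1 hη hφ hφc j, key2 hη hφ hφc⟩
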